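/- Let A be an n×n symmetric positive semi-definite matrix with all eigenvalues at most 1, and let B be an n×n symmetric positive semi-definite matrix. Then log det(I + A·B) ≤ n·log(1 + tr(B)/n). -/

import Mathlib

/-!
With `S = √A`, Sylvester's identity gives `det (1 + A B) = det (1 + S B S)`, where `S B S` is
positive semidefinite. AM–GM on the eigenvalues of `1 + S B S` bounds its log-determinant by
`n log (1 + tr (S B S) / n)`, and `tr (S B S) = tr (A B) ≤ tr B` because `A ≤ 1` and `B ≥ 0`.
-/

open Matrix Finset
open scoped MatrixOrder ComplexOrder

theorem Real.sum_log_le_card_mul_log_mean {ι : Type*} (s : Finset ι) {z : ι → ℝ}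
    (hz : ∀ i ∈ s, 0 < z i) :
    ∑ i ∈ s, Real.log (z i) ≤ #s * Real.log ((∑ i ∈ s, z i) / #s) := by
  rcases s.eq_empty_or_nonempty with rfl | hs
  · simp
  have hcard : (0 : ℝ) < #s := by exact_mod_cast hs.card_pos
  have jensen := strictConcaveOn_log_Ioi.concaveOn.le_map_sum (t := s)
    (w := fun _ => (#s : ℝ)⁻¹) (p := z) (fun _ _ => by positivity)
    (by simp [hcard.ne']) hz
  rw [← smul_sum, ← smul_sum, smul_eq_mul, smul_eq_mul, inv_mul_le_iff₀ hcard] at jensen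
  rwa [div_eq_inv_mul]

namespace Matrix

variable {ι 𝕜 : Type*} [Fintype ι] [DecidableEq ι] [RCLike 𝕜]

theorem IsHermitian.le_one_iff_eigenvalues_le_one {A : Matrix ι ι 𝕜} (hA : A.IsHermitian) :
    A ≤ 1 ↔ ∀ i, hA.eigenvalues i ≤ 1 := by
  rw [CFC.le_one_iff (R := ℝ) A hA, hA.spectrum_real_eq_range_eigenvalues, Set.forall_mem_range]

theorem trace_mul_le_trace_mul_of_le {A C B : Matrix ι ι 𝕜} (hAC : A ≤ C) (hB : 0 ≤ B) :
    (A * B).trace ≤ (C * B).trace := by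
  have hS : IsSelfAdjoint (CFC.sqrt B) := IsSelfAdjoint.of_nonneg (CFC.sqrt_nonneg B)
  have hconj := hS.conjugate_le_conjugate hAC
  rw [le_iff] at hconj
  have := hconj.trace_nonneg
  rw [trace_sub, sub_nonneg, trace_mul_cycle, CFC.sqrt_mul_sqrt_self B,
    trace_mul_cycle, CFC.sqrt_mul_sqrt_self B] at this
  rwa [trace_mul_comm A, trace_mul_comm C]

theorem PosDef.log_det_le {P : Matrix ι ι ℝ} (hP : P.PosDef) :
    Real.log P.det ≤ Fintype.card ι * Real.log (P.trace / Fintype.card ι) := by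
  rw [hP.1.det_eq_prod_eigenvalues, hP.1.trace_eq_sum_eigenvalues]
  simp only [RCLike.ofReal_real_eq_id, id]
  rw [Real.log_prod fun i _ => (hP.eigenvalues_pos i).ne']
  exact Real.sum_log_le_card_mul_log_mean univ fun i _ => hP.eigenvalues_pos i

end Matrix

theorem stmt_6_general {n : ℕ} (A B : Matrix (Fin n) (Fin n) ℝ)
    (hA : A.PosSemidef) (hA1 : ∀ i, hA.1.eigenvalues i ≤ 1)
    (hB : B.PosSemidef) :
    Real.log ((1 + A * B).det) ≤ n * Real.log (1 + B.trace / n) := by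
  obtain rfl | hn := n.eq_zero_or_pos
  · simp
  set S := CFC.sqrt A
  have hSS : S * S = A := CFC.sqrt_mul_sqrt_self A hA.nonneg
  have hdet : (1 + A * B).det = (1 + S * B * S).det := by
    rw [← hSS, mul_assoc, det_one_add_mul_comm]
  have hM : 0 ≤ S * B * S := conjugate_nonneg_of_nonneg hB.nonneg (CFC.sqrt_nonneg A)
  have htrace : (S * B * S).trace ≤ B.trace := by
    rw [trace_mul_cycle, hSS]
    simpa using trace_mul_le_trace_mul_of_le (hA.1.le_one_iff_eigenvalues_le_one.2 hA1) hB.nonneg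
  have hpd : (1 + S * B * S).PosDef := PosDef.one.add_posSemidef hM.posSemidef
  have hnR : (0 : ℝ) < n := by exact_mod_cast hn
  calc Real.log ((1 + A * B).det)
      ≤ n * Real.log ((1 + S * B * S).trace / n) := by simpa [hdet] using hpd.log_det_le
    _ = n * Real.log (1 + (S * B * S).trace / n) := by
      rw [trace_add, trace_one, Fintype.card_fin, add_div, div_self hnR.ne']
    _ ≤ n * Real.log (1 + B.trace / n) := by
      gcongr
      exact add_pos_of_pos_of_nonneg one_pos (div_nonneg hM.posSemidef.trace_nonneg hnR.le)

theorem stmt_6 {n : ℕ} (hn : 0 < n) (A B : Matrix (Fin n) (Fin n) ℝ)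
    (hA : A.PosSemidef) (hA1 : ∀ i, hA.1.eigenvalues i ≤ 1)
    (hB : B.PosSemidef) :
    Real.log ((1 + A * B).det) ≤ n * Real.log (1 + B.trace / n) :=
  stmt_6_general A B hA hA1 hB
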